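/- arXiv:1708.03277 — 7 statements merged into one kernel-verified Lean document; each statement's English description precedes it below -/
import Mathlib

section
/- Let a ≤ b be real numbers, β > 0, and let x, s ∈ [a,b] and g ∈ ℝ. Set v = −βx + βs − g, and define the one-dimensional tangent-cone projection P(x,v) = v if a < x < b, P(x,v) = max(0,v) if x = a, and P(x,v) = −max(0,−v) if x = b. Then the projection error ζ = v − P(x,v) satisfies |ζ| ≤ |g|. -/
/-- Projection onto the tangent cone of the interval `[a,b]` at a point `x ∈ [a,b]`. -/
noncomputable def proj (a b x v : ℝ) : ℝ :=
  if a < x ∧ x < b then v else if x = a then max 0 v else -(max 0 (-v))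

/-- Lemma 6.1, part 1: the projection error is bounded by the gradient term. -/
theorem stmt_1 (a b β x s g : ℝ) (hab : a ≤ b) (hβ : 0 < β)
    (hx : x ∈ Set.Icc a b) (hs : s ∈ Set.Icc a b) :
    |(-β * x + β * s - g) - proj a b x (-β * x + β * s - g)| ≤ |g| := by
  obtain ⟨hxa, hxb⟩ := hx
  obtain ⟨hsa, hsb⟩ := hs
  unfold proj
  split_ifs with h1 h2
  · simp
  · -- x = a
    subst h2
    have hv : -β * x + β * s - g ≥ -g := by nlinarith
    rcases le_or_gt 0 (-β * x + β * s - g) with hv0 | hv0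
    · rw [max_eq_right hv0]; simp
    · rw [max_eq_left hv0.le, sub_zero, abs_le]
      exact ⟨by linarith [le_abs_self g], by linarith [abs_nonneg g]⟩
  · -- x = b
    have hxb' : x = b := by
      rcases lt_or_eq_of_le hxa with h | h
      · rcases lt_or_eq_of_le hxb with h' | h'
        · exact absurd ⟨h, h'⟩ h1
        · exact h'
      · exact absurd h.symm h2
    subst hxb'
    have hv : -β * x + β * s - g ≤ -g := by nlinarith
    rcases le_or_gt (-β * x + β * s - g) 0 with hv0 | hv0
    · rw [max_eq_right (by linarith : (0:ℝ) ≤ -(-β * x + β * s - g))]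
      simp
    · rw [max_eq_left (by linarith : -(-β * x + β * s - g) ≤ 0), neg_zero, sub_zero, abs_le]
      exact ⟨by linarith [abs_nonneg g], by linarith [neg_abs_le g]⟩
end

section
/- Let a ≤ b be real numbers, let x ∈ [a,b] and v ∈ ℝ, and define the one-dimensional tangent-cone projection P(x,v) = v if a < x < b, P(x,v) = max(0,v) if x = a, and P(x,v) = −max(0,−v) if x = b. Let r ∈ ℝ be a feasible direction at x, i.e., r ≥ 0 if x = a and r ≤ 0 if x = b (no restriction if a < x < b). Then, with ζ = v − P(x,v), one has (v − r)·ζ ≥ ζ². -/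
/-- Lemma 6.1, part 2: for any feasible direction `r` at `x`,
`(v − r)·ζ ≥ ζ²` where `ζ = v − P(x,v)` is the projection error. -/
theorem stmt_2 (a b x v r : ℝ) (hab : a ≤ b) (hx : x ∈ Set.Icc a b)
    (hra : x = a → 0 ≤ r) (hrb : x = b → r ≤ 0) :
    (v - r) * (v - proj a b x v) ≥ (v - proj a b x v) ^ 2 := by
  obtain ⟨hxa, hxb⟩ := hx
  unfold proj
  split_ifs with h1 h2
  · simp
  · have hr := hra h2
    rcases le_or_gt 0 v with hv | hv
    · simp [max_eq_right hv]
    · have : max 0 v = 0 := max_eq_left hv.le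
      rw [this]
      nlinarith
  · have hxb' : x = b := by
      rcases lt_or_eq_of_le hxa with h | h
      · by_contra hne
        exact h1 ⟨h, lt_of_le_of_ne hxb hne⟩
      · exact absurd h.symm h2
    have hr := hrb hxb'
    rcases le_or_gt v 0 with hv | hv
    · have : max 0 (-v) = -v := max_eq_right (by linarith)
      simp [this]
    · have : max 0 (-v) = 0 := max_eq_left (by linarith)
      rw [this]
      nlinarith
end

section
/- Delayed Grönwall–Bellman inequality: let β > 0, σ₂ > 0, τ ≥ 0 and set γ = σ₂e^{βτ}. Let g : [−τ,∞) → [0,∞) and μ : [−τ,∞) → [0,∞) be continuous and suppose that g(s) ≤ μ(s) for all s ∈ [−τ,0] and that g(t) ≤ μ(t) + βσ₂ ∫₀ᵗ e^{−β(t−u)} g(u−τ) du for all t ≥ 0. Then g(t) ≤ μ(t) + βσ₂ ∫₀ᵗ e^{−β(1−γ)(t−u)} μ(u−τ) du for all t ≥ 0. -/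
open Real Set

/-!
Put `w(t) = ∫₀ᵗ e^{βu} g(u - τ) du`, so that the hypothesis reads
`g(t) ≤ μ(t) + βσ₂ e^{-βt} w(t)`. Applied at `t - τ` and combined with the monotonicity of `w`
(for `t ≤ τ` the initial condition suffices), it gives the linear differential inequality
`w'(t) = e^{βt} g(t - τ) ≤ βγ w(t) + e^{βt} μ(t - τ)` for `t ≥ 0`. As `w(0) = 0`, Grönwall's
inequality bounds `w(t)` by `∫₀ᵗ e^{βγ(t-u)} e^{βu} μ(u - τ) du`, and substituting this back into
the hypothesis gives the claim.
-/

theorem hasDerivWithinAt_Ici_integral_of_continuousOn {φ : ℝ → ℝ} {a b x : ℝ}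
    (hφ : ContinuousOn φ (Icc a b)) (hx : x ∈ Ico a b) :
    HasDerivWithinAt (fun t => ∫ u in a..t, φ u) (φ x) (Ici x) x := by
  have hnhds : Icc a b ∈ nhdsWithin x (Ioi x) :=
    Filter.mem_of_superset (Ioc_mem_nhdsGT hx.2)
      (Ioc_subset_Icc_self.trans (Icc_subset_Icc_left hx.1))
  exact intervalIntegral.integral_hasDerivWithinAt_right
    ((hφ.mono (Icc_subset_Icc_right hx.2.le)).intervalIntegrable_of_Icc hx.1)
    (hφ.stronglyMeasurableAtFilter_nhdsWithin measurableSet_Icc x |>.filter_mono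
      (nhdsWithin_le_of_mem hnhds))
    ((hφ x (Ico_subset_Icc_self hx)).mono_of_mem_nhdsWithin hnhds)

theorem continuousOn_integral_of_continuousOn {φ : ℝ → ℝ} {a b : ℝ} (hab : a ≤ b)
    (hφ : ContinuousOn φ (Icc a b)) :
    ContinuousOn (fun t => ∫ u in a..t, φ u) (Icc a b) := by
  have hint : MeasureTheory.IntegrableOn φ (uIcc a b) := by
    simpa [uIcc_of_le hab] using hφ.integrableOn_Icc
  simpa [uIcc_of_le hab] using intervalIntegral.continuousOn_primitive_interval hint

theorem le_exp_mul_add_integral_of_deriv_right_le {f f' h : ℝ → ℝ} {K a b : ℝ} (hab : a ≤ b)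
    (hf : ContinuousOn f (Icc a b)) (hf' : ∀ x ∈ Ico a b, HasDerivWithinAt f (f' x) (Ici x) x)
    (hh : ContinuousOn h (Icc a b)) (bound : ∀ x ∈ Ico a b, f' x ≤ K * f x + h x) :
    f b ≤ exp (K * (b - a)) * f a + ∫ u in a..b, exp (K * (b - u)) * h u := by
  set P := fun t => ∫ u in a..t, exp (-(K * u)) * h u
  have hexpc : Continuous fun u => exp (-(K * u)) := by fun_prop
  have hPh : ContinuousOn (fun u => exp (-(K * u)) * h u) (Icc a b) := hexpc.continuousOn.mul hh
  -- the integrating factor `exp (-K x)` turns the differential inequality into antitonicity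
  have hφ : ∀ x ∈ Ico a b, HasDerivWithinAt (fun t => exp (-(K * t)) * f t - P t)
      (exp (-(K * x)) * (f' x - K * f x - h x)) (Ici x) x := by
    intro x hx
    have hexp : HasDerivAt (fun t => exp (-(K * t))) (-K * exp (-(K * x))) x := by
      simpa [mul_comm] using ((hasDerivAt_id x).const_mul K).neg.exp
    exact ((hexp.hasDerivWithinAt.mul (hf' x hx)).sub
      (hasDerivWithinAt_Ici_integral_of_continuousOn hPh hx)).congr_deriv (by ring)
  have hPa : P a = 0 := intervalIntegral.integral_same
  have hanti : exp (-(K * b)) * f b - P b ≤ exp (-(K * a)) * f a := by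
    simpa [hPa] using image_le_of_deriv_right_le_deriv_boundary
      (B := fun _ => exp (-(K * a)) * f a - P a) (B' := 0)
      ((hexpc.continuousOn.mul hf).sub (continuousOn_integral_of_continuousOn hab hPh))
      hφ le_rfl continuousOn_const (fun x _ => hasDerivWithinAt_const _ _ _)
      (fun x hx => mul_nonpos_of_nonneg_of_nonpos (exp_pos _).le (by linarith [bound x hx]))
      (right_mem_Icc.2 hab)
  have hfb : f b = exp (K * b) * (exp (-(K * b)) * f b) := by
    rw [← mul_assoc, ← exp_add]; simp
  have hint : ∫ u in a..b, exp (K * (b - u)) * h u = exp (K * b) * P b := by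
    rw [← intervalIntegral.integral_const_mul]
    congr 1; ext u
    rw [← mul_assoc, ← exp_add, mul_sub, sub_eq_add_neg]
  have hexp : exp (K * (b - a)) = exp (K * b) * exp (-(K * a)) := by rw [← exp_add]; ring_nf
  rw [hint, hfb, hexp]
  nlinarith [mul_le_mul_of_nonneg_left hanti (exp_pos (K * b)).le]

theorem ContinuousOn.exp_mul_comp_sub {g : ℝ → ℝ} {τ : ℝ} (hg : ContinuousOn g (Ici (-τ)))
    (β : ℝ) : ContinuousOn (fun u => exp (β * u) * g (u - τ)) (Ici 0) :=
  (continuous_exp.comp (continuous_const_mul β)).continuousOn.mul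
    (hg.comp (continuous_sub_right τ).continuousOn fun u (hu : 0 ≤ u) => by
      simp only [mem_Ici]; linarith)

/-- The paper's auxiliary function `w`. -/
noncomputable def delayedIntegral (β τ : ℝ) (g : ℝ → ℝ) (t : ℝ) : ℝ :=
  ∫ u in (0 : ℝ)..t, exp (β * u) * g (u - τ)

theorem integral_exp_neg_mul_sub_mul_eq_delayedIntegral (β τ t : ℝ) (g : ℝ → ℝ) :
    ∫ u in (0 : ℝ)..t, exp (-β * (t - u)) * g (u - τ) =
      exp (-(β * t)) * delayedIntegral β τ g t := by
  rw [delayedIntegral, ← intervalIntegral.integral_const_mul]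
  congr 1; ext u
  rw [← mul_assoc, ← exp_add]; ring_nf

theorem delayedIntegral_monotoneOn {β τ : ℝ} {g : ℝ → ℝ} (hg : ContinuousOn g (Ici (-τ)))
    (hg0 : ∀ s, -τ ≤ s → 0 ≤ g s) : MonotoneOn (delayedIntegral β τ g) (Ici 0) := by
  intro s (hs : 0 ≤ s) t (ht : 0 ≤ t) hst
  have hint : ∀ {x}, 0 ≤ x →
      IntervalIntegrable (fun u => exp (β * u) * g (u - τ)) MeasureTheory.volume 0 x :=
    fun hx => (hg.exp_mul_comp_sub β).mono (by rw [uIcc_of_le hx]; exact Icc_subset_Ici_self)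
      |>.intervalIntegrable
  have hdiff := intervalIntegral.integral_interval_sub_left (hint ht) (hint hs)
  have hnonneg : 0 ≤ ∫ u in s..t, exp (β * u) * g (u - τ) :=
    intervalIntegral.integral_nonneg hst fun u hu =>
      mul_nonneg (exp_pos _).le (hg0 _ (by linarith [hu.1]))
  simp only [delayedIntegral]
  linarith

theorem exp_mul_comp_sub_le_mul_delayedIntegral_add {β σ₂ τ : ℝ} {g μ : ℝ → ℝ} (hβ : 0 ≤ β)
    (hσ : 0 ≤ σ₂) (hτ : 0 ≤ τ) (hmono : MonotoneOn (delayedIntegral β τ g) (Ici 0))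
    (hinit : ∀ s ∈ Icc (-τ) 0, g s ≤ μ s)
    (hineq : ∀ t ≥ (0:ℝ), g t ≤ μ t +
      β * σ₂ * ∫ u in (0:ℝ)..t, exp (-β * (t - u)) * g (u - τ)) {t : ℝ} (ht : 0 ≤ t) :
    exp (β * t) * g (t - τ) ≤
      β * (σ₂ * exp (β * τ)) * delayedIntegral β τ g t + exp (β * t) * μ (t - τ) := by
  rcases le_total t τ with htτ | hτt
  · have hgμ := hinit (t - τ) ⟨by linarith, by linarith⟩
    have hw0 : 0 ≤ delayedIntegral β τ g t := by
      simpa [delayedIntegral] using hmono self_mem_Ici ht ht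
    have : 0 ≤ β * (σ₂ * exp (β * τ)) * delayedIntegral β τ g t := by positivity
    linarith [mul_le_mul_of_nonneg_left hgμ (exp_pos (β * t)).le]
  · have hpast := hineq (t - τ) (sub_nonneg.2 hτt)
    rw [integral_exp_neg_mul_sub_mul_eq_delayedIntegral] at hpast
    have hwle := hmono (sub_nonneg.2 hτt) ht (by linarith : t - τ ≤ t)
    have hexp : exp (β * t) * exp (-(β * (t - τ))) = exp (β * τ) := by
      rw [← exp_add]; ring_nf
    calc exp (β * t) * g (t - τ)
        ≤ exp (β * t) *
            (μ (t - τ) + β * σ₂ * (exp (-(β * (t - τ))) * delayedIntegral β τ g (t - τ))) :=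
          mul_le_mul_of_nonneg_left hpast (exp_pos _).le
      _ = β * (σ₂ * exp (β * τ)) * delayedIntegral β τ g (t - τ) + exp (β * t) * μ (t - τ) := by
          rw [← hexp]; ring
      _ ≤ _ := by gcongr

theorem stmt_3_general (β σ₂ τ γ : ℝ) (hβ : 0 < β) (hσ : 0 < σ₂) (hτ : 0 ≤ τ)
    (hγ : γ = σ₂ * Real.exp (β * τ))
    (g μ : ℝ → ℝ)
    (hgc : ContinuousOn g (Set.Ici (-τ))) (hμc : ContinuousOn μ (Set.Ici (-τ)))
    (hg0 : ∀ s, -τ ≤ s → 0 ≤ g s)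
    (hinit : ∀ s ∈ Set.Icc (-τ) 0, g s ≤ μ s)
    (hineq : ∀ t ≥ (0:ℝ), g t ≤ μ t +
      β * σ₂ * ∫ u in (0:ℝ)..t, Real.exp (-β * (t - u)) * g (u - τ)) :
    ∀ t ≥ (0:ℝ), g t ≤ μ t +
      β * σ₂ * ∫ u in (0:ℝ)..t, Real.exp (-β * (1 - γ) * (t - u)) * μ (u - τ) := by
  intro t ht
  have hgc' := (hgc.exp_mul_comp_sub β).mono (Icc_subset_Ici_self : Icc 0 t ⊆ Ici 0)
  have hμc' := (hμc.exp_mul_comp_sub β).mono (Icc_subset_Ici_self : Icc 0 t ⊆ Ici 0)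
  have hw : delayedIntegral β τ g t ≤
      ∫ u in (0:ℝ)..t, exp (β * γ * (t - u)) * (exp (β * u) * μ (u - τ)) := by
    simpa [delayedIntegral] using le_exp_mul_add_integral_of_deriv_right_le ht
      (continuousOn_integral_of_continuousOn ht hgc')
      (fun x hx => hasDerivWithinAt_Ici_integral_of_continuousOn hgc' hx) hμc'
      fun x hx => by
        rw [hγ]
        exact exp_mul_comp_sub_le_mul_delayedIntegral_add hβ.le hσ.le hτ
          (delayedIntegral_monotoneOn hgc hg0) hinit hineq hx.1
  have hkernel :
      exp (-(β * t)) * ∫ u in (0:ℝ)..t, exp (β * γ * (t - u)) * (exp (β * u) * μ (u - τ)) =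
        ∫ u in (0:ℝ)..t, exp (-β * (1 - γ) * (t - u)) * μ (u - τ) := by
    rw [← intervalIntegral.integral_const_mul]
    congr 1; ext u
    rw [← mul_assoc, ← mul_assoc, ← exp_add, ← exp_add]; ring_nf
  calc g t ≤ μ t + β * σ₂ * (exp (-(β * t)) * delayedIntegral β τ g t) := by
        rw [← integral_exp_neg_mul_sub_mul_eq_delayedIntegral]; exact hineq t ht
    _ ≤ _ := by rw [← hkernel]; gcongr

/-- Delayed Grönwall–Bellman inequality (step (c) of the proof of Lemma 4.1). -/
theorem stmt_3 (β σ₂ τ γ : ℝ) (hβ : 0 < β) (hσ : 0 < σ₂) (hτ : 0 ≤ τ)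
    (hγ : γ = σ₂ * Real.exp (β * τ))
    (g μ : ℝ → ℝ)
    (hgc : ContinuousOn g (Set.Ici (-τ))) (hμc : ContinuousOn μ (Set.Ici (-τ)))
    (hg0 : ∀ s, -τ ≤ s → 0 ≤ g s) (hμ0 : ∀ s, -τ ≤ s → 0 ≤ μ s)
    (hinit : ∀ s ∈ Set.Icc (-τ) 0, g s ≤ μ s)
    (hineq : ∀ t ≥ (0:ℝ), g t ≤ μ t +
      β * σ₂ * ∫ u in (0:ℝ)..t, Real.exp (-β * (t - u)) * g (u - τ)) :
    ∀ t ≥ (0:ℝ), g t ≤ μ t +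
      β * σ₂ * ∫ u in (0:ℝ)..t, Real.exp (-β * (1 - γ) * (t - u)) * μ (u - τ) :=
  stmt_3_general β σ₂ τ γ hβ hσ hτ hγ g μ hgc hμc hg0 hinit hineq
end

section
/- Let β > 0, γ ∈ (0,1), τ ≥ 0, and let α : ℝ → (0,1] be nonincreasing. Then for every t ≥ 0, ∫₀ᵗ α(u) ( ∫₀ᵘ e^{−β(1−γ)(u−s)} α((s−τ)/2) ds ) du ≤ 2/(β²(1−γ)²) + (1/(β(1−γ))) ∫₀ᵗ α²((u−2τ)/4) du. -/
/-!
Write `c = β(1 - γ)`. Split the inner integral at `s = u/2`: on `[0, u/2]` use `α ≤ 1`, and the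
kernel `e^{-c(u-s)}` integrates to at most `e^{-cu/2}/c`; on `[u/2, u]` monotonicity bounds `α((s-τ)/2)` by `α((u-2τ)/4)`, and the kernel integrates to at most `1/c`.
Since also `α u ≤ α((u-2τ)/4)`, the outer integrand is at most
`e^{-cu/2}/c + α((u-2τ)/4)²/c`, and `∫₀^∞ e^{-cu/2} du = 2/c`.
-/

open Real MeasureTheory intervalIntegral Set

lemma integral_exp_neg_mul_sub_le {c : ℝ} (hc : 0 < c) (u a b : ℝ) :
    ∫ s in a..b, exp (-c * (u - s)) ≤ exp (-c * (u - b)) / c := by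
  have hderiv : ∀ s ∈ uIcc a b,
      HasDerivAt (fun s => exp (-c * (u - s)) / c) (exp (-c * (u - s))) s := by
    intro s _
    exact ((((hasDerivAt_id' s).const_sub u).const_mul (-c)).exp.div_const c).congr_deriv
      (by field_simp)
  rw [integral_eq_sub_of_hasDerivAt hderiv (Continuous.intervalIntegrable (by fun_prop) _ _)]
  linarith [div_pos (exp_pos (-c * (u - a))) hc]

lemma integral_exp_neg_mul_le {c : ℝ} (hc : 0 < c) (t : ℝ) :
    ∫ u in (0:ℝ)..t, exp (-c * u) ≤ 1 / c := by
  have hderiv : ∀ u ∈ uIcc 0 t, HasDerivAt (fun u => -exp (-c * u) / c) (exp (-c * u)) u := by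
    intro u _
    exact (((hasDerivAt_id' u).const_mul (-c)).exp.neg.div_const c).congr_deriv
      (by field_simp)
  rw [integral_eq_sub_of_hasDerivAt hderiv (Continuous.intervalIntegrable (by fun_prop) _ _)]
  simp only [mul_zero, exp_zero, neg_div]
  linarith [div_pos (exp_pos (-c * t)) hc]

lemma integral_exp_neg_mul_sub_mul_le {c : ℝ} (hc : 0 < c) {g : ℝ → ℝ} (hg : Antitone g)
    (hg0 : ∀ s, 0 ≤ g s) (hg1 : ∀ s, g s ≤ 1) {u : ℝ} (hu : 0 ≤ u) :
    ∫ s in (0:ℝ)..u, exp (-c * (u - s)) * g s ≤ (exp (-(c / 2) * u) + g (u / 2)) / c := by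
  have hint : ∀ a b, IntervalIntegrable (fun s => exp (-c * (u - s)) * g s) volume a b :=
    fun a b => hg.intervalIntegrable.continuousOn_mul (by fun_prop)
  have hkernel : ∀ a b, IntervalIntegrable (fun s => exp (-c * (u - s))) volume a b :=
    fun a b => Continuous.intervalIntegrable (by fun_prop) a b
  have hfar : ∫ s in (0:ℝ)..u / 2, exp (-c * (u - s)) * g s ≤ exp (-(c / 2) * u) / c :=
    calc _ ≤ ∫ s in (0:ℝ)..u / 2, exp (-c * (u - s)) :=
          integral_mono_on (by linarith) (hint _ _) (hkernel _ _)
            fun s _ => mul_le_of_le_one_right (exp_pos _).le (hg1 s)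
      _ ≤ exp (-c * (u - u / 2)) / c := integral_exp_neg_mul_sub_le hc u _ _
      _ = exp (-(c / 2) * u) / c := by ring_nf
  have hnear : ∫ s in u / 2..u, exp (-c * (u - s)) * g s ≤ g (u / 2) / c :=
    calc _ ≤ ∫ s in u / 2..u, exp (-c * (u - s)) * g (u / 2) :=
          integral_mono_on (by linarith) (hint _ _) ((hkernel _ _).mul_const _)
            fun s hs => mul_le_mul_of_nonneg_left (hg hs.1) (exp_pos _).le
      _ = (∫ s in u / 2..u, exp (-c * (u - s))) * g (u / 2) := integral_mul_const _ _
      _ ≤ exp (-c * (u - u)) / c * g (u / 2) :=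
          mul_le_mul_of_nonneg_right (integral_exp_neg_mul_sub_le hc u _ _) (hg0 _)
      _ = g (u / 2) / c := by simp only [sub_self, mul_zero, exp_zero]; ring
  rw [← integral_add_adjacent_intervals (hint 0 (u / 2)) (hint (u / 2) u), add_div]
  exact add_le_add hfar hnear

lemma mul_integral_exp_neg_mul_sub_mul_delayed_le {c τ : ℝ} (hc : 0 < c) (hτ : 0 ≤ τ)
    {α : ℝ → ℝ} (hα : Antitone α) (hα0 : ∀ t, 0 ≤ α t) (hα1 : ∀ t, α t ≤ 1) {u : ℝ}
    (hu : 0 ≤ u) :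
    α u * ∫ s in (0:ℝ)..u, exp (-c * (u - s)) * α ((s - τ) / 2)
      ≤ exp (-(c / 2) * u) / c + α ((u - 2 * τ) / 4) ^ 2 / c := by
  have hinner := integral_exp_neg_mul_sub_mul_le hc (g := fun s => α ((s - τ) / 2))
    (fun a b hab => hα (by linarith)) (fun _ => hα0 _) (fun _ => hα1 _) hu
  rw [show (u / 2 - τ) / 2 = (u - 2 * τ) / 4 by ring] at hinner
  have hαu : α u ≤ α ((u - 2 * τ) / 4) := hα (by linarith)
  calc _ ≤ α u * ((exp (-(c / 2) * u) + α ((u - 2 * τ) / 4)) / c) :=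
        mul_le_mul_of_nonneg_left hinner (hα0 u)
    _ = α u * (exp (-(c / 2) * u) / c) + α u * (α ((u - 2 * τ) / 4) / c) := by ring
    _ ≤ 1 * (exp (-(c / 2) * u) / c) + α ((u - 2 * τ) / 4) * (α ((u - 2 * τ) / 4) / c) :=
        add_le_add (mul_le_mul_of_nonneg_right (hα1 u) (by positivity))
          (mul_le_mul_of_nonneg_right hαu (div_nonneg (hα0 _) hc.le))
    _ = _ := by ring

/-- Equation (8b) in the proof of part (3) of Lemma 4.1. -/
theorem stmt_8 (β γ τ : ℝ) (hβ : 0 < β) (hγ : γ ∈ Set.Ioo (0:ℝ) 1) (hτ : 0 ≤ τ)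
    (α : ℝ → ℝ) (hαpos : ∀ t, 0 < α t) (hαle : ∀ t, α t ≤ 1) (hanti : Antitone α) :
    ∀ t ≥ (0:ℝ),
      (∫ u in (0:ℝ)..t, α u *
        ∫ s in (0:ℝ)..u, Real.exp (-β * (1 - γ) * (u - s)) * α ((s - τ) / 2))
      ≤ 2 / (β ^ 2 * (1 - γ) ^ 2)
        + (1 / (β * (1 - γ))) * ∫ u in (0:ℝ)..t, (α ((u - 2 * τ) / 4)) ^ 2 := by
  intro t ht
  have hc : 0 < β * (1 - γ) := mul_pos hβ (by linarith [hγ.2])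
  set c := β * (1 - γ) with hc_def
  have hα0 : ∀ x, 0 ≤ α x := fun x => (hαpos x).le
  have hdecay : IntervalIntegrable (fun u => exp (-(c / 2) * u)) volume 0 t :=
    Continuous.intervalIntegrable (by fun_prop) _ _
  have hsq : IntervalIntegrable (fun u => α ((u - 2 * τ) / 4) ^ 2) volume 0 t :=
    Antitone.intervalIntegrable fun a b hab => pow_le_pow_left₀ (hα0 _) (hanti (by linarith)) 2
  -- The left integrand need not be shown integrable: it is nonnegative.
  calc _ ≤ ∫ u in (0:ℝ)..t, (exp (-(c / 2) * u) / c + α ((u - 2 * τ) / 4) ^ 2 / c) := by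
        rw [integral_of_le ht, integral_of_le ht]
        refine setIntegral_mono_of_nonneg (fun u hu => ?_) (fun u hu => ?_)
          ((hdecay.div_const c).add (hsq.div_const c)).1
        · exact mul_nonneg (hα0 u)
            (integral_nonneg hu.1.le fun s _ => mul_nonneg (exp_pos _).le (hα0 _))
        · simpa only [neg_mul] using
            mul_integral_exp_neg_mul_sub_mul_delayed_le hc hτ hanti hα0 hαle hu.1.le
    _ = (∫ u in (0:ℝ)..t, exp (-(c / 2) * u)) / c
          + (∫ u in (0:ℝ)..t, α ((u - 2 * τ) / 4) ^ 2) / c := by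
        rw [integral_add (hdecay.div_const c) (hsq.div_const c), intervalIntegral.integral_div, intervalIntegral.integral_div]
    _ ≤ 1 / (c / 2) / c + (∫ u in (0:ℝ)..t, α ((u - 2 * τ) / 4) ^ 2) / c := by
        gcongr
        exact integral_exp_neg_mul_le (by positivity) t
    _ = _ := by rw [hc_def]; field_simp
end

section
/- In the delayed distributed gradient dynamics, assume α : ℝ → (0,∞) is nonincreasing with α(t) = 1 for all t ≤ 0 and lim_{t→∞} α(t) = 0. Then for every i = 1,…,n, lim_{t→∞} |x_i(t) − x̄(t)| = 0, i.e., the agents' estimates asymptotically reach consensus at their average. -/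
/-- Euclidean norm on `ℝⁿ`. -/
noncomputable def eNorm {n : ℕ} (y : Fin n → ℝ) : ℝ := Real.sqrt (∑ i, (y i) ^ 2)

/-- Average of the agents' estimates. -/
noncomputable def avg {n : ℕ} (x : Fin n → ℝ → ℝ) (t : ℝ) : ℝ := (∑ i, x i t) / n

/-- Velocity field of the delayed distributed gradient dynamics:
`v_i(t) = −βx_i(t) + βΣⱼ a_{ij}x_j(t−τ) − α(t)f_i'(x_i(t))`. -/
noncomputable def vel {n : ℕ} (β τ : ℝ) (A : Fin n → Fin n → ℝ) (α : ℝ → ℝ)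
    (f' : Fin n → ℝ → ℝ) (x : Fin n → ℝ → ℝ) (i : Fin n) (t : ℝ) : ℝ :=
  -β * x i t + β * (∑ j, A i j * x j (t - τ)) - α t * f' i (x i t)

open Filter Topology Set Real

/-!
The disagreement vector `y = x - x̄ 𝟙` obeys `y' = -β y + β A y(t - τ) - (g - ḡ 𝟙)`, where
`g = α f' + ζ` collects the gradient and projection-error terms: double stochasticity of `A` lets
the averaging commute with the dynamics. The projection only removes a velocity component that
points out of `[a, b]`, while the consensus term `β (Σⱼ a_{ij} x_j(t - τ) - x_i)` points inwards,
so `|ζ_i| ≤ |α f_i'|` and `g → 0`. Since `A` contracts zero-sum vectors by `σ₂`, comparing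
`e^{βt} y(t)` with its derivative shows that a bound `‖y‖ ≤ c` valid from some time on improves to
`‖y‖ ≤ σ₂ c + ε`; hence `L = limsup ‖y‖` satisfies `L ≤ σ₂ L`, so `L = 0`.
-/

theorem eNorm_eq_norm_toLp {n : ℕ} (y : Fin n → ℝ) : eNorm y = ‖WithLp.toLp 2 y‖ := by
  simp [EuclideanSpace.norm_eq, eNorm]

theorem abs_add_sub_proj_le {a b x u w : ℝ} (hx : x ∈ Icc a b) (ha : x = a → 0 ≤ u)
    (hb : x = b → u ≤ 0) : |u + w - proj a b x (u + w)| ≤ |w| := by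
  unfold proj
  split_ifs with hint hxa
  · simp
  · specialize ha hxa
    rcases le_total 0 (u + w) with h | h
    · simp [max_eq_right h]
    · rw [max_eq_left h, sub_zero, abs_of_nonpos h]
      linarith [neg_abs_le w]
  · have hxb : x = b := by
      by_contra hxb
      exact hint ⟨lt_of_le_of_ne hx.1 (Ne.symm hxa), lt_of_le_of_ne hx.2 hxb⟩
    specialize hb hxb
    rcases le_total 0 (u + w) with h | h
    · rw [max_eq_left (neg_nonpos.2 h), neg_zero, sub_zero, abs_of_nonneg h]
      linarith [le_abs_self w]
    · rw [max_eq_right (neg_nonneg.2 h), neg_neg, sub_self, abs_zero]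
      exact abs_nonneg w

theorem norm_le_exp_mul_add_of_hasDerivAt {E : Type*} [NormedAddCommGroup E] [NormedSpace ℝ E]
    {y w : ℝ → E} {β K T t : ℝ} (hβ : 0 < β) (hTt : T ≤ t)
    (hy : ∀ s ∈ Icc T t, HasDerivAt y (-β • y s + w s) s) (hw : ∀ s ∈ Icc T t, ‖w s‖ ≤ K) :
    ‖y t‖ ≤ exp (-(β * (t - T))) * ‖y T‖ + K / β := by
  have hexp : ∀ s, HasDerivAt (fun r => exp (β * r)) (β * exp (β * s)) s := fun s => by
    simpa [mul_comm] using ((hasDerivAt_id s).const_mul β).exp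
  have hnorm : ∀ r (v : E), ‖exp (β * r) • v‖ = exp (β * r) * ‖v‖ := fun r v => by
    rw [norm_smul, norm_of_nonneg (exp_pos _).le]
  have hu : ∀ s ∈ Icc T t, HasDerivAt (fun r => exp (β * r) • y r) (exp (β * s) • w s) s :=
    fun s hs => ((hexp s).smul (hy s hs)).congr_deriv (by module)
  set B : ℝ → ℝ := fun r => exp (β * T) * ‖y T‖ + K * (exp (β * r) - exp (β * T)) / β
  have hB : ∀ s, HasDerivAt B (exp (β * s) * K) s := fun s =>
    (((hexp s).sub_const _).const_mul K |>.div_const β |>.const_add _).congr_deriv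
      (by field_simp)
  have hcomp : exp (β * t) * ‖y t‖ ≤ B t := by
    rw [← hnorm]
    refine image_norm_le_of_norm_deriv_right_le_deriv_boundary
      (fun s hs => (hu s hs).continuousAt.continuousWithinAt)
      (fun s hs => (hu s (Ico_subset_Icc_self hs)).hasDerivWithinAt) (by simp [B, hnorm]) hB
      (fun s hs => ?_) (right_mem_Icc.2 hTt)
    rw [hnorm]
    exact mul_le_mul_of_nonneg_left (hw s (Ico_subset_Icc_self hs)) (exp_pos _).le
  have hK : 0 ≤ K := (norm_nonneg _).trans (hw T (left_mem_Icc.2 hTt))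
  rw [← mul_le_mul_iff_of_pos_left (exp_pos (β * t))]
  calc exp (β * t) * ‖y t‖ ≤ B t := hcomp
    _ ≤ exp (β * T) * ‖y T‖ + K * exp (β * t) / β := by
      simp only [B]; gcongr; linarith [exp_pos (β * T)]
    _ = exp (β * t) * (exp (-(β * (t - T))) * ‖y T‖ + K / β) := by
      rw [mul_add, ← mul_assoc, ← exp_add]; ring_nf

theorem eventually_norm_le_of_hasDerivAt {E : Type*} [NormedAddCommGroup E] [NormedSpace ℝ E]
    {y w : ℝ → E} {β K ε : ℝ} (hβ : 0 < β) (hε : 0 < ε)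
    (hy : ∀ᶠ s in atTop, HasDerivAt y (-β • y s + w s) s) (hw : ∀ᶠ s in atTop, ‖w s‖ ≤ K) :
    ∀ᶠ t in atTop, ‖y t‖ ≤ K / β + ε := by
  obtain ⟨T, hT⟩ := eventually_atTop.1 (hy.and hw)
  have hdecay : Tendsto (fun t => exp (-(β * (t - T))) * ‖y T‖) atTop (𝓝 0) := by
    simpa [sub_eq_add_neg] using (tendsto_exp_atBot.comp <| tendsto_neg_atTop_atBot.comp <|
      (tendsto_atTop_add_const_right atTop (-T) tendsto_id).const_mul_atTop hβ).mul_const ‖y T‖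
  filter_upwards [eventually_ge_atTop T, hdecay.eventually (ge_mem_nhds hε)] with t hTt hsmall
  have := norm_le_exp_mul_add_of_hasDerivAt hβ hTt (fun s hs => (hT s hs.1).1)
    (fun s hs => (hT s hs.1).2)
  linarith

theorem tendsto_zero_of_eventually_le_contraction {ι : Type*} {l : Filter ι} [l.NeBot]
    {V : ι → ℝ} {σ : ℝ} (hσ : σ < 1) (hV0 : ∀ t, 0 ≤ V t) (hbdd : IsBoundedUnder (· ≤ ·) l V)
    (hstep : ∀ c ε, 0 < ε → (∀ᶠ t in l, V t ≤ c) → ∀ᶠ t in l, V t ≤ σ * c + ε) :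
    Tendsto V l (𝓝 0) := by
  have hbdd' : IsBoundedUnder (· ≥ ·) l V := isBoundedUnder_of_eventually_ge (.of_forall hV0)
  set L := limsup V l
  have hL : ∀ ε, 0 < ε → L ≤ σ * (L + ε) + ε := fun ε hε =>
    limsup_le_of_le hbdd'.isCoboundedUnder_le <|
      hstep _ ε hε <| (eventually_lt_of_limsup_lt (lt_add_of_pos_right L hε) hbdd).mono
        fun _ => le_of_lt
  have hL0 : L * (1 - σ) ≤ 0 := le_of_forall_pos_le_add fun ε hε => by
    nlinarith [hL (ε / 2) (half_pos hε)]
  refine tendsto_of_le_liminf_of_limsup_le ?_ ?_ hbdd hbdd'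
  · exact le_liminf_of_le hbdd.isCoboundedUnder_ge (.of_forall hV0)
  · nlinarith

section Consensus

variable {n : ℕ} {A : Fin n → Fin n → ℝ}

theorem hasDerivAt_sub_avg (hArow : ∀ i, ∑ j, A i j = 1)
    (hAcol : ∀ j, ∑ i, A i j = 1) {x g : Fin n → ℝ → ℝ} {β τ t : ℝ}
    (hx : ∀ i, HasDerivAt (x i) (-β * x i t + β * ∑ j, A i j * x j (t - τ) - g i t) t)
    (i : Fin n) :
    HasDerivAt (fun s => x i s - avg x s)
      (-β * (x i t - avg x t) +
        (β * ∑ j, A i j * (x j (t - τ) - avg x (t - τ)) - (g i t - avg g t))) t := by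
  have havg : HasDerivAt (avg x)
      ((∑ i, (-β * x i t + β * ∑ j, A i j * x j (t - τ) - g i t)) / n) t :=
    (HasDerivAt.fun_sum fun i _ => hx i).div_const n
  refine ((hx i).sub havg).congr_deriv ?_
  have hrow : ∑ j, A i j * (x j (t - τ) - avg x (t - τ))
      = ∑ j, A i j * x j (t - τ) - avg x (t - τ) := by
    simp only [mul_sub, Finset.sum_sub_distrib, ← Finset.sum_mul, hArow i, one_mul]
  have hcol : ∑ i, ∑ j, A i j * x j (t - τ) = ∑ j, x j (t - τ) := by
    rw [Finset.sum_comm]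
    simp only [← Finset.sum_mul, hAcol, one_mul]
  rw [hrow]
  simp only [avg, Finset.sum_sub_distrib, Finset.sum_add_distrib, ← Finset.mul_sum, hcol]
  ring

noncomputable def disagreement (x : Fin n → ℝ → ℝ) (t : ℝ) : EuclideanSpace ℝ (Fin n) :=
  WithLp.toLp 2 fun i => x i t - avg x t

theorem sum_sub_avg_eq_zero [NeZero n] (x : Fin n → ℝ → ℝ) (t : ℝ) :
    ∑ i, (x i t - avg x t) = 0 := by
  rw [Finset.sum_sub_distrib, Finset.sum_const, Finset.card_univ, Fintype.card_fin, nsmul_eq_mul,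
    avg, mul_div_cancel₀ _ (Nat.cast_ne_zero.2 (NeZero.ne n)), sub_self]

theorem abs_sub_avg_le_of_mem_Icc [NeZero n] {x : Fin n → ℝ → ℝ} {a b t : ℝ}
    (hx : ∀ i, x i t ∈ Icc a b) (i : Fin n) : |x i t - avg x t| ≤ b - a := by
  have havg : avg x t ∈ Icc a b := by
    have hn : (n : ℝ) ≠ 0 := Nat.cast_ne_zero.2 (NeZero.ne n)
    convert (convex_Icc a b).sum_mem (t := Finset.univ) (w := fun _ => (n : ℝ)⁻¹)
      (fun _ _ => by positivity) (by simp [hn]) (fun i _ => hx i) using 1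
    simp [avg, ← Finset.mul_sum, div_eq_inv_mul]
  rw [abs_sub_le_iff]
  constructor <;> linarith [(hx i).1, (hx i).2, havg.1, havg.2]

theorem norm_disagreement_le_of_mem_Icc [NeZero n] {x : Fin n → ℝ → ℝ} {a b t : ℝ}
    (hx : ∀ i, x i t ∈ Icc a b) : ‖disagreement x t‖ ≤ √(n * (b - a) ^ 2) := by
  rw [disagreement, EuclideanSpace.norm_eq]
  gcongr
  calc ∑ i, ‖x i t - avg x t‖ ^ 2 ≤ ∑ _i : Fin n, (b - a) ^ 2 := by
        gcongr with i
        rw [Real.norm_eq_abs]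
        exact abs_sub_avg_le_of_mem_Icc hx i
    _ = n * (b - a) ^ 2 := by simp

theorem hasDerivAt_disagreement (hArow : ∀ i, ∑ j, A i j = 1) (hAcol : ∀ j, ∑ i, A i j = 1)
    {x g : Fin n → ℝ → ℝ} {β τ t : ℝ}
    (hx : ∀ i, HasDerivAt (x i) (-β * x i t + β * ∑ j, A i j * x j (t - τ) - g i t) t) :
    HasDerivAt (disagreement x)
      (-β • disagreement x t +
        (β • WithLp.toLp 2 (fun i => ∑ j, A i j * (x j (t - τ) - avg x (t - τ))) -
          WithLp.toLp 2 (fun i => g i t - avg g t))) t :=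
  ((PiLp.hasFDerivAt_toLp 2 _).comp_hasDerivAt t
    (hasDerivAt_pi.2 (hasDerivAt_sub_avg hArow hAcol hx))).congr_deriv
    (by ext i; simp [disagreement])

theorem tendsto_toLp_sub_avg {l : Filter ℝ} {g : Fin n → ℝ → ℝ}
    (hg : ∀ i, Tendsto (g i) l (𝓝 0)) :
    Tendsto (fun t => WithLp.toLp 2 fun i => g i t - avg g t) l
      (𝓝 (0 : EuclideanSpace ℝ (Fin n))) := by
  have havg : Tendsto (fun t => (∑ i, g i t) / n) l (𝓝 0) := by
    simpa using (tendsto_finsetSum Finset.univ fun i _ => hg i).div_const (n : ℝ)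
  have h := ((PiLp.continuous_toLp 2 _).tendsto (0 : Fin n → ℝ)).comp
    (tendsto_pi_nhds.2 fun i => by simpa using (hg i).sub havg)
  rwa [WithLp.toLp_zero] at h

theorem tendsto_abs_sub_avg_of_delayed_consensus {σ β τ a b : ℝ} {x g : Fin n → ℝ → ℝ}
    (hArow : ∀ i, ∑ j, A i j = 1) (hAcol : ∀ j, ∑ i, A i j = 1) (hσ0 : 0 ≤ σ) (hσ1 : σ < 1)
    (hAcontr : ∀ y : Fin n → ℝ, ∑ i, y i = 0 →
      eNorm (fun i => ∑ j, A i j * y j) ≤ σ * eNorm y)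
    (hβ : 0 < β) (hxmem : ∀ᶠ t in atTop, ∀ i, x i t ∈ Icc a b)
    (hx : ∀ᶠ t in atTop, ∀ i,
      HasDerivAt (x i) (-β * x i t + β * ∑ j, A i j * x j (t - τ) - g i t) t)
    (hg : ∀ i, Tendsto (g i) atTop (𝓝 0)) (i : Fin n) :
    Tendsto (fun t => |x i t - avg x t|) atTop (𝓝 0) := by
  have : NeZero n := ⟨i.pos.ne'⟩
  set y := disagreement x
  set mix : ℝ → EuclideanSpace ℝ (Fin n) :=
    fun t => WithLp.toLp 2 fun i => ∑ j, A i j * (x j t - avg x t)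
  set G : ℝ → EuclideanSpace ℝ (Fin n) := fun t => WithLp.toLp 2 fun i => g i t - avg g t
  have hmix : ∀ t, ‖mix t‖ ≤ σ * ‖y t‖ := fun t => by
    have h := hAcontr _ (sum_sub_avg_eq_zero x t)
    rwa [eNorm_eq_norm_toLp, eNorm_eq_norm_toLp] at h
  have hy : ∀ᶠ t in atTop, HasDerivAt y (-β • y t + (β • mix (t - τ) - G t)) t :=
    hx.mono fun t => hasDerivAt_disagreement hArow hAcol
  refine squeeze_zero (fun t => abs_nonneg _) (fun t => PiLp.norm_apply_le (y t) i) ?_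
  refine tendsto_zero_of_eventually_le_contraction hσ1 (fun t => norm_nonneg (y t))
    (isBoundedUnder_of_eventually_le (hxmem.mono fun t => norm_disagreement_le_of_mem_Icc)) ?_
  intro c ε hε hc
  have hw : ∀ᶠ t in atTop, ‖β • mix (t - τ) - G t‖ ≤ β * (σ * c) + β * (ε / 2) := by
    filter_upwards [(tendsto_atTop_add_const_right atTop (-τ) tendsto_id).eventually hc,
      (tendsto_toLp_sub_avg hg).eventually (Metric.closedBall_mem_nhds 0
        (by positivity : 0 < β * (ε / 2)))]
      with t hct hGt
    calc ‖β • mix (t - τ) - G t‖ ≤ β * ‖mix (t - τ)‖ + ‖G t‖ := by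
          simpa [norm_smul, abs_of_pos hβ] using norm_sub_le (β • mix (t - τ)) (G t)
      _ ≤ β * (σ * c) + β * (ε / 2) := by
          gcongr
          · exact (hmix _).trans (by gcongr; exact hct)
          · simpa using hGt
  filter_upwards [eventually_norm_le_of_hasDerivAt hβ (half_pos hε) hy hw] with t ht
  calc ‖y t‖ ≤ (β * (σ * c) + β * (ε / 2)) / β + ε / 2 := ht
    _ = σ * c + ε := by field_simp; ring

end Consensus

theorem abs_vel_sub_proj_le {n : ℕ} {a b β τ t : ℝ} {A : Fin n → Fin n → ℝ} {α : ℝ → ℝ}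
    {f' x : Fin n → ℝ → ℝ} {i : Fin n} (hA0 : ∀ j, 0 ≤ A i j) (hArow : ∑ j, A i j = 1)
    (hβ : 0 ≤ β) (hxt : x i t ∈ Icc a b) (hxτ : ∀ j, x j (t - τ) ∈ Icc a b) :
    |vel β τ A α f' x i t - proj a b (x i t) (vel β τ A α f' x i t)| ≤ |α t * f' i (x i t)| := by
  have hm : ∑ j, A i j * x j (t - τ) ∈ Icc a b := by
    simpa using (convex_Icc a b).sum_mem (fun j _ => hA0 j) hArow (fun j _ => hxτ j)
  have hvel : vel β τ A α f' x i t
      = β * (∑ j, A i j * x j (t - τ) - x i t) + -(α t * f' i (x i t)) := by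
    unfold vel
    ring
  rw [hvel, ← abs_neg (α t * f' i (x i t))]
  refine abs_add_sub_proj_le hxt (fun h => ?_) (fun h => ?_)
  · exact mul_nonneg hβ (sub_nonneg.2 (h ▸ hm.1))
  · exact mul_nonpos_of_nonneg_of_nonpos hβ (sub_nonpos.2 (h ▸ hm.2))

theorem stmt_11_general
    (n : ℕ) (a b : ℝ)
    (A : Fin n → Fin n → ℝ) (hA0 : ∀ i j, 0 ≤ A i j)
    (hArow : ∀ i, ∑ j, A i j = 1) (hAcol : ∀ j, ∑ i, A i j = 1)
    (σ₂ : ℝ) (hσ : σ₂ ∈ Set.Ioo (0:ℝ) 1)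
    (hAcontr : ∀ y : Fin n → ℝ, (∑ i, y i) = 0 →
      eNorm (fun i => ∑ j, A i j * y j) ≤ σ₂ * eNorm y)
    (f' : Fin n → ℝ → ℝ)
    (Cb : Fin n → ℝ) (hCb : ∀ i, ∀ z ∈ Set.Icc a b, |f' i z| ≤ Cb i)
    (τ : ℝ) (hτ : 0 < τ)
    (β : ℝ) (hβ : 0 < β)
    (α : ℝ → ℝ)
    (x : Fin n → ℝ → ℝ)
    (hxmem : ∀ i, ∀ t ≥ -τ, x i t ∈ Set.Icc a b)
    (hxode : ∀ i, ∀ t ≥ (0:ℝ),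
      HasDerivAt (x i) (proj a b (x i t) (vel β τ A α f' x i t)) t)
    (hαlim : Filter.Tendsto α Filter.atTop (nhds 0)) :
    ∀ i : Fin n,
      Filter.Tendsto (fun t => |x i t - avg x t|) Filter.atTop (nhds 0) := by
  set g : Fin n → ℝ → ℝ := fun j t =>
    α t * f' j (x j t) + (vel β τ A α f' x j t - proj a b (x j t) (vel β τ A α f' x j t))
  have hg : ∀ j, Tendsto (g j) atTop (𝓝 0) := fun j => by
    refine squeeze_zero_norm' ?_ (by simpa using (hαlim.abs.const_mul 2).mul_const (Cb j))
    filter_upwards [eventually_ge_atTop 0] with t ht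
    have hf' : |f' j (x j t)| ≤ Cb j := hCb j _ (hxmem j t (by linarith))
    have hζ := abs_vel_sub_proj_le (α := α) (f' := f') (hA0 j) (hArow j) hβ.le
      (hxmem j t (by linarith)) (fun k => hxmem k (t - τ) (by linarith))
    calc ‖g j t‖ ≤ |α t * f' j (x j t)| + |α t * f' j (x j t)| := (abs_add_le _ _).trans (by gcongr)
      _ ≤ 2 * |α t| * Cb j := by rw [abs_mul]; nlinarith [abs_nonneg (α t)]
  intro i
  refine tendsto_abs_sub_avg_of_delayed_consensus (τ := τ) hArow hAcol hσ.1.le hσ.2 hAcontr hβ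
    ((eventually_ge_atTop (-τ)).mono fun t ht i => hxmem i t ht) ?_ hg i
  filter_upwards [eventually_ge_atTop 0] with t ht j
  refine (hxode j t ht).congr_deriv ?_
  simp only [g, vel]
  ring

/-- Lemma 4.1, part (2): asymptotic consensus of the agents' estimates. -/
theorem stmt_11
    (n : ℕ) (hn : 1 ≤ n) (a b : ℝ) (hab : a ≤ b)
    (A : Fin n → Fin n → ℝ) (hA0 : ∀ i j, 0 ≤ A i j)
    (hArow : ∀ i, ∑ j, A i j = 1) (hAcol : ∀ j, ∑ i, A i j = 1)
    (σ₂ : ℝ) (hσ : σ₂ ∈ Set.Ioo (0:ℝ) 1)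
    (hAcontr : ∀ y : Fin n → ℝ, (∑ i, y i) = 0 →
      eNorm (fun i => ∑ j, A i j * y j) ≤ σ₂ * eNorm y)
    (f f' : Fin n → ℝ → ℝ)
    (hconv : ∀ i, ConvexOn ℝ Set.univ (f i))
    (hderiv : ∀ i z, HasDerivAt (f i) (f' i z) z)
    (Cb : Fin n → ℝ) (hCb : ∀ i, ∀ z ∈ Set.Icc a b, |f' i z| ≤ Cb i)
    (C : ℝ) (hC : C = ∑ i, Cb i)
    (τ : ℝ) (hτ : 0 < τ)
    (β : ℝ) (hβ : 0 < β) (hβ2 : β < Real.log (1 / σ₂) / τ)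
    (γ : ℝ) (hγ : γ = σ₂ * Real.exp (β * τ))
    (α : ℝ → ℝ) (hαpos : ∀ t, 0 < α t)
    (x : Fin n → ℝ → ℝ)
    (hxcont : ∀ i, ContinuousOn (x i) (Set.Ici (-τ)))
    (hxmem : ∀ i, ∀ t ≥ -τ, x i t ∈ Set.Icc a b)
    (hxode : ∀ i, ∀ t ≥ (0:ℝ),
      HasDerivAt (x i) (proj a b (x i t) (vel β τ A α f' x i t)) t)
    (hαanti : Antitone α) (hα1 : ∀ t ≤ (0:ℝ), α t = 1)
    (hαlim : Filter.Tendsto α Filter.atTop (nhds 0)) :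
    ∀ i : Fin n,
      Filter.Tendsto (fun t => |x i t - avg x t|) Filter.atTop (nhds 0) :=
  stmt_11_general n a b A hA0 hArow hAcol σ₂ hσ hAcontr f' Cb hCb τ hτ β hβ α x hxmem hxode hαlim
end

section
/- Let a ≤ b be real numbers and let f_i : ℝ → ℝ (i = 1,…,n) be convex and differentiable with |f_i'(x)| ≤ C_i for all x ∈ [a,b]; set C = Σᵢ C_i. Let x₁,…,xₙ ∈ [a,b], let x̄ = (1/n)Σᵢ xᵢ, and let x* ∈ [a,b] be a minimizer of Σᵢ f_i over [a,b]. Then Σᵢ (x* − x̄)·f_i'(xᵢ) ≤ 2C‖x − x̄·(1,…,1)‖₂ − ( Σᵢ f_i(x̄) − Σᵢ f_i(x*) ), where x = (x₁,…,xₙ) and ‖·‖₂ is the Euclidean norm on ℝⁿ. -/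
/-- Gradient inequality for a convex differentiable function on `ℝ`. -/
lemma grad_ineq (g g' : ℝ → ℝ) (hc : ConvexOn ℝ Set.univ g)
    (hd : ∀ z, HasDerivAt g (g' z) z) (u v : ℝ) :
    g' u * (v - u) ≤ g v - g u := by
  rcases lt_trichotomy u v with h | h | h
  · have hs := hc.le_slope_of_hasDerivAt (Set.mem_univ u) (Set.mem_univ v) h (hd u)
    rw [slope_def_field] at hs
    have hpos : (0:ℝ) < v - u := by linarith
    calc g' u * (v - u) ≤ (g v - g u) / (v - u) * (v - u) := by
          exact mul_le_mul_of_nonneg_right hs hpos.le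
      _ = g v - g u := by field_simp
  · simp [h]
  · have hs := hc.slope_le_of_hasDerivAt (Set.mem_univ v) (Set.mem_univ u) h (hd u)
    rw [slope_comm, slope_def_field] at hs
    have hneg : v - u < 0 := by linarith
    have := mul_le_mul_of_nonpos_right hs hneg.le
    calc g' u * (v - u) ≤ (g v - g u) / (v - u) * (v - u) := this
      _ = g v - g u := by
          rw [div_mul_cancel₀]
          exact hneg.ne

/-- The bound on the term `W₁` in the proof of Theorem 4.2. -/
theorem stmt_13 (n : ℕ) (hn : 1 ≤ n) (a b : ℝ) (hab : a ≤ b)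
    (f f' : Fin n → ℝ → ℝ)
    (hconv : ∀ i, ConvexOn ℝ Set.univ (f i))
    (hderiv : ∀ i z, HasDerivAt (f i) (f' i z) z)
    (Cb : Fin n → ℝ) (hCb : ∀ i, ∀ z ∈ Set.Icc a b, |f' i z| ≤ Cb i)
    (C : ℝ) (hC : C = ∑ i, Cb i)
    (x : Fin n → ℝ) (hx : ∀ i, x i ∈ Set.Icc a b)
    (xbar : ℝ) (hxbar : xbar = (∑ i, x i) / n)
    (xstar : ℝ) (hxstar : xstar ∈ Set.Icc a b)
    (hmin : ∀ y ∈ Set.Icc a b, (∑ i, f i xstar) ≤ ∑ i, f i y) :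
    (∑ i, (xstar - xbar) * f' i (x i))
      ≤ 2 * C * eNorm (fun i => x i - xbar) - ((∑ i, f i xbar) - ∑ i, f i xstar) := by
  have hnpos : (0:ℝ) < n := by exact_mod_cast hn
  -- xbar ∈ [a,b]
  have hxbar_mem : xbar ∈ Set.Icc a b := by
    constructor
    · rw [hxbar, le_div_iff₀ hnpos]
      calc a * n = ∑ _i : Fin n, a := by simp [mul_comm]
        _ ≤ ∑ i, x i := Finset.sum_le_sum fun i _ => (hx i).1
    · rw [hxbar, div_le_iff₀ hnpos]
      calc (∑ i, x i) ≤ ∑ _i : Fin n, b := Finset.sum_le_sum fun i _ => (hx i).2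
        _ = b * n := by simp [mul_comm]
  set N := eNorm (fun i => x i - xbar) with hN
  have hNnonneg : 0 ≤ N := Real.sqrt_nonneg _
  -- |x i - xbar| ≤ N
  have habs_le : ∀ i, |x i - xbar| ≤ N := by
    intro i
    rw [hN, eNorm, ← Real.sqrt_sq_eq_abs]
    exact Real.sqrt_le_sqrt (Finset.single_le_sum (f := fun j => (x j - xbar) ^ 2) (fun j _ => sq_nonneg _) (Finset.mem_univ i))
  have hCbnonneg : ∀ i, 0 ≤ Cb i := fun i =>
    le_trans (abs_nonneg _) (hCb i a ⟨le_refl a, hab⟩)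
  -- Lipschitz bound on Icc
  have hlip : ∀ i, ∀ y ∈ Set.Icc a b, ∀ z ∈ Set.Icc a b, |f i y - f i z| ≤ Cb i * |y - z| := by
    intro i y hy z hz
    have := (convex_Icc a b).norm_image_sub_le_of_norm_hasDerivWithin_le
      (f' := f' i) (fun w hw => (hderiv i w).hasDerivWithinAt)
      (fun w hw => by rw [Real.norm_eq_abs]; exact hCb i w hw) hz hy
    simpa [Real.norm_eq_abs] using this
  -- per-index bound
  have key : ∀ i, (xstar - xbar) * f' i (x i)
      ≤ (f i xstar - f i (x i)) + Cb i * |x i - xbar| := by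
    intro i
    have hg := grad_ineq (f i) (f' i) (hconv i) (hderiv i) (x i) xstar
    have h2 : (x i - xbar) * f' i (x i) ≤ Cb i * |x i - xbar| := by
      calc (x i - xbar) * f' i (x i) ≤ |(x i - xbar) * f' i (x i)| := le_abs_self _
        _ = |x i - xbar| * |f' i (x i)| := abs_mul _ _
        _ ≤ |x i - xbar| * Cb i :=
            mul_le_mul_of_nonneg_left (hCb i (x i) (hx i)) (abs_nonneg _)
        _ = Cb i * |x i - xbar| := mul_comm _ _
    nlinarith [hg, h2]
  -- f i xbar - f i (x i) ≤ Cb i * |x i - xbar|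
  have hmid : ∀ i, f i xbar - f i (x i) ≤ Cb i * |x i - xbar| := by
    intro i
    have := hlip i xbar hxbar_mem (x i) (hx i)
    have h1 : f i xbar - f i (x i) ≤ |f i xbar - f i (x i)| := le_abs_self _
    rw [abs_sub_comm xbar (x i)] at this
    linarith
  have hsum1 : (∑ i, (xstar - xbar) * f' i (x i))
      ≤ (∑ i, f i xstar) - (∑ i, f i (x i)) + ∑ i, Cb i * |x i - xbar| := by
    calc (∑ i, (xstar - xbar) * f' i (x i))
        ≤ ∑ i, ((f i xstar - f i (x i)) + Cb i * |x i - xbar|) :=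
          Finset.sum_le_sum fun i _ => key i
      _ = (∑ i, f i xstar) - (∑ i, f i (x i)) + ∑ i, Cb i * |x i - xbar| := by
          rw [Finset.sum_add_distrib, Finset.sum_sub_distrib]
  have hsum2 : (∑ i, f i xbar) - (∑ i, f i (x i)) ≤ ∑ i, Cb i * |x i - xbar| := by
    rw [← Finset.sum_sub_distrib]
    exact Finset.sum_le_sum fun i _ => hmid i
  have hsum3 : (∑ i, Cb i * |x i - xbar|) ≤ C * N := by
    rw [hC, Finset.sum_mul]
    exact Finset.sum_le_sum fun i _ =>
      mul_le_mul_of_nonneg_left (habs_le i) (hCbnonneg i)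
  linarith
end

section
/- In the delayed distributed gradient dynamics, let x* ∈ [a,b] be a minimizer of Σᵢ f_i over [a,b]. Then for every t ≥ 0 the projection error terms satisfy −(1/n) Σᵢ (x̄(t) − x*)·ζ_i(t) ≤ (Cα(t)/n)·‖x(t) − x̄(t)·(1,…,1)‖₂ + C²α²(t)/n. -/
set_option maxHeartbeats 1000000 in
/-- The bound on the projection-error term W₂ in the proof of Theorem 4.2. -/
theorem stmt_14
    (n : ℕ) (hn : 1 ≤ n) (a b : ℝ) (hab : a ≤ b)
    (A : Fin n → Fin n → ℝ) (hA0 : ∀ i j, 0 ≤ A i j)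
    (hArow : ∀ i, ∑ j, A i j = 1) (hAcol : ∀ j, ∑ i, A i j = 1)
    (σ₂ : ℝ) (hσ : σ₂ ∈ Set.Ioo (0:ℝ) 1)
    (hAcontr : ∀ y : Fin n → ℝ, (∑ i, y i) = 0 →
      eNorm (fun i => ∑ j, A i j * y j) ≤ σ₂ * eNorm y)
    (f f' : Fin n → ℝ → ℝ)
    (hconv : ∀ i, ConvexOn ℝ Set.univ (f i))
    (hderiv : ∀ i z, HasDerivAt (f i) (f' i z) z)
    (Cb : Fin n → ℝ) (hCb : ∀ i, ∀ z ∈ Set.Icc a b, |f' i z| ≤ Cb i)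
    (C : ℝ) (hC : C = ∑ i, Cb i)
    (τ : ℝ) (hτ : 0 < τ)
    (β : ℝ) (hβ : 0 < β) (hβ2 : β < Real.log (1 / σ₂) / τ)
    (γ : ℝ) (hγ : γ = σ₂ * Real.exp (β * τ))
    (α : ℝ → ℝ) (hαpos : ∀ t, 0 < α t)
    (x : Fin n → ℝ → ℝ)
    (hxcont : ∀ i, ContinuousOn (x i) (Set.Ici (-τ)))
    (hxmem : ∀ i, ∀ t ≥ -τ, x i t ∈ Set.Icc a b)
    (hxode : ∀ i, ∀ t ≥ (0:ℝ),
      HasDerivAt (x i) (proj a b (x i t) (vel β τ A α f' x i t)) t)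
    (xstar : ℝ) (hxstar : xstar ∈ Set.Icc a b)
    (hmin : ∀ y ∈ Set.Icc a b, (∑ i, f i xstar) ≤ ∑ i, f i y) :
    ∀ t ≥ (0:ℝ),
      -(1 / n) * ∑ i, (avg x t - xstar) *
          (vel β τ A α f' x i t - proj a b (x i t) (vel β τ A α f' x i t))
        ≤ (C * α t / n) * eNorm (fun i => x i t - avg x t) + C ^ 2 * (α t) ^ 2 / n := by
  intro t ht
  have hnpos : (0:ℝ) < n := by exact_mod_cast hn
  set N := eNorm (fun i => x i t - avg x t) with hN
  have hN0 : 0 ≤ N := Real.sqrt_nonneg _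
  have hα : 0 < α t := hαpos t
  have hCb0 : ∀ i, 0 ≤ Cb i := fun i =>
    le_trans (abs_nonneg _) (hCb i a ⟨le_refl a, hab⟩)
  have hC0 : 0 ≤ C := by
    rw [hC]; exact Finset.sum_nonneg fun i _ => hCb0 i
  have key : ∀ i, -((avg x t - xstar) *
      (vel β τ A α f' x i t - proj a b (x i t) (vel β τ A α f' x i t)))
      ≤ α t * Cb i * N := by
    intro i
    set v := vel β τ A α f' x i t with hv
    set y := x i t with hy
    set ζ := v - proj a b y v with hζ
    have hymem : y ∈ Set.Icc a b := hxmem i t (by linarith)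
    have hf'bd : |f' i y| ≤ Cb i := hCb i y hymem
    -- bounds on the delayed consensus sum
    have hSlb : a ≤ ∑ j, A i j * x j (t - τ) := by
      calc a = ∑ j, A i j * a := by rw [← Finset.sum_mul, hArow i, one_mul]
        _ ≤ ∑ j, A i j * x j (t - τ) := Finset.sum_le_sum fun j _ =>
            mul_le_mul_of_nonneg_left (hxmem j (t - τ) (by linarith)).1 (hA0 i j)
    have hSub : ∑ j, A i j * x j (t - τ) ≤ b := by
      calc ∑ j, A i j * x j (t - τ) ≤ ∑ j, A i j * b := Finset.sum_le_sum fun j _ =>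
            mul_le_mul_of_nonneg_left (hxmem j (t - τ) (by linarith)).2 (hA0 i j)
        _ = b := by rw [← Finset.sum_mul, hArow i, one_mul]
    -- the two key facts about ζ
    have hmain : 0 ≤ (y - xstar) * ζ ∧ |ζ| ≤ α t * Cb i := by
      by_cases hint : a < y ∧ y < b
      · have : ζ = 0 := by rw [hζ, proj, if_pos hint]; ring
        rw [this]
        constructor
        · simp
        · rw [abs_zero]; exact mul_nonneg hα.le (hCb0 i)
      · by_cases hya : y = a
        · have hvlb : -(α t * Cb i) ≤ v := by
            have h1 : -β * y + β * (∑ j, A i j * x j (t - τ)) ≥ 0 := by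
              rw [hya]; nlinarith
            have h2 : f' i y ≤ Cb i := le_trans (le_abs_self _) hf'bd
            have : α t * f' i y ≤ α t * Cb i :=
              mul_le_mul_of_nonneg_left h2 hα.le
            rw [hv, vel]
            simp only [← hy]
            nlinarith
          have hζeq : ζ = min v 0 := by
            rw [hζ, proj, if_neg hint, if_pos hya]
            rcases le_total v 0 with h | h
            · rw [max_eq_left h, min_eq_left h]; ring
            · rw [max_eq_right h, min_eq_right h]; ring
          have hζ0 : ζ ≤ 0 := by rw [hζeq]; exact min_le_right _ _
          have hζlb : -(α t * Cb i) ≤ ζ := by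
            rw [hζeq]
            rcases le_total v 0 with h | h
            · rw [min_eq_left h]; exact hvlb
            · rw [min_eq_right h]
              have := mul_nonneg hα.le (hCb0 i); linarith
          constructor
          · have : y - xstar ≤ 0 := by
              have := hxstar.1; rw [hya]; linarith
            nlinarith
          · rw [abs_le]; constructor <;> linarith
        · have hyb : y = b := by
            push_neg at hint
            rcases hymem with ⟨h1, h2⟩
            rcases lt_or_eq_of_le h1 with h | h
            · exact le_antisymm h2 (hint h)
            · exact absurd h.symm hya
          have hvub : v ≤ α t * Cb i := by
            have h1 : -β * y + β * (∑ j, A i j * x j (t - τ)) ≤ 0 := by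
              rw [hyb]; nlinarith
            have h2 : -(Cb i) ≤ f' i y := by
              have := neg_abs_le (f' i y); linarith [abs_le.mp hf'bd |>.1]
            have : -(α t * Cb i) ≤ α t * f' i y := by nlinarith
            rw [hv, vel]
            simp only [← hy]
            nlinarith
          have hζeq : ζ = max v 0 := by
            rw [hζ, proj, if_neg hint, if_neg hya]
            rcases le_total v 0 with h | h
            · rw [max_eq_right (neg_nonneg.mpr h), max_eq_right h]; ring
            · rw [max_eq_left (neg_nonpos.mpr h), max_eq_left h]; ring
          have hζ0 : 0 ≤ ζ := by rw [hζeq]; exact le_max_right _ _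
          have hζub : ζ ≤ α t * Cb i := by
            rw [hζeq]
            rcases le_total v 0 with h | h
            · rw [max_eq_right h]; exact mul_nonneg hα.le (hCb0 i)
            · rw [max_eq_left h]; exact hvub
          constructor
          · have : 0 ≤ y - xstar := by
              have := hxstar.2; rw [hyb]; linarith
            nlinarith
          · rw [abs_le]; constructor <;> linarith
      -- end cases
    obtain ⟨hprod, habs⟩ := hmain
    have hxbd : |avg x t - y| ≤ N := by
      have h1 := Finset.single_le_sum
        (f := fun j => (x j t - avg x t) ^ 2) (fun j _ => sq_nonneg _) (Finset.mem_univ i)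
      have h2 := Real.sqrt_le_sqrt h1
      rw [Real.sqrt_sq_eq_abs] at h2
      rw [abs_sub_comm]
      exact h2
    have h3 : -((avg x t - y) * ζ) ≤ |avg x t - y| * |ζ| := by
      rw [← abs_mul]; exact neg_le_abs _
    have h4 : |avg x t - y| * |ζ| ≤ N * (α t * Cb i) :=
      mul_le_mul hxbd habs (abs_nonneg _) hN0
    nlinarith
  have hsum : ∑ i, -((avg x t - xstar) *
      (vel β τ A α f' x i t - proj a b (x i t) (vel β τ A α f' x i t)))
      ≤ ∑ i, α t * Cb i * N := Finset.sum_le_sum fun i _ => key i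
  have hsumeq : ∑ i, α t * Cb i * N = C * α t * N := by
    rw [hC, Finset.sum_mul, Finset.sum_mul]
    exact Finset.sum_congr rfl fun i _ => by ring
  have hneg : -(1 / (n:ℝ)) * ∑ i, (avg x t - xstar) *
      (vel β τ A α f' x i t - proj a b (x i t) (vel β τ A α f' x i t))
      = (1 / (n:ℝ)) * ∑ i, -((avg x t - xstar) *
      (vel β τ A α f' x i t - proj a b (x i t) (vel β τ A α f' x i t))) := by
    rw [Finset.sum_neg_distrib]; ring
  rw [hneg]
  have h5 : (1 / (n:ℝ)) * ∑ i, -((avg x t - xstar) *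
      (vel β τ A α f' x i t - proj a b (x i t) (vel β τ A α f' x i t)))
      ≤ (1 / (n:ℝ)) * (C * α t * N) := by
    apply mul_le_mul_of_nonneg_left _ (by positivity)
    rw [← hsumeq]; exact hsum
  have h6 : (1 / (n:ℝ)) * (C * α t * N) = (C * α t / n) * N := by ring
  have h7 : 0 ≤ C ^ 2 * (α t) ^ 2 / n := by positivity
  linarith
end
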